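/- The set of convex polyhedra in ℝⁿ ordered by set inclusion forms a lattice in which the meet of two polyhedra is their intersection and the join of two polyhedra P, Q is the poly-hull, the smallest polyhedron containing P ∪ Q; the empty set and ℝⁿ are the bottom and top elements. -/
import Mathlib

/-- A convex polyhedron: a finite intersection of closed affine half-spaces
`{v | ⟨aᵢ, v⟩ ≥ bᵢ}` with `aᵢ ≠ 0` (the empty intersection giving `ℝⁿ`). -/
def IsPolyhedron {n : ℕ} (P : Set (Fin n → ℝ)) : Prop :=
  ∃ (m : ℕ) (a : Fin m → Fin n → ℝ) (b : Fin m → ℝ),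
    (∀ i, a i ≠ 0) ∧ P = {v | ∀ i, b i ≤ ∑ j, a i j * v j}

/-- The poly-hull: the intersection of all polyhedra containing both arguments. -/
def polyHull {n : ℕ} (P Q : Set (Fin n → ℝ)) : Set (Fin n → ℝ) :=
  ⋂₀ {R | IsPolyhedron R ∧ P ⊆ R ∧ Q ⊆ R}

/-- Polyhedron-like set, allowing zero rows and an arbitrary finite index type. -/
def Poly' {k : ℕ} (S : Set (Fin k → ℝ)) : Prop :=
  ∃ (ι : Type) (_ : Fintype ι) (a : ι → Fin k → ℝ) (b : ι → ℝ),
    S = {x | ∀ i, b i ≤ ∑ j, a i j * x j}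

lemma isPolyhedron_empty {n : ℕ} (hn : 0 < n) : IsPolyhedron (∅ : Set (Fin n → ℝ)) := by
  refine ⟨2, ![fun _ => 1, fun _ => -1], ![1, 1], ?_, ?_⟩
  · intro i
    fin_cases i <;> exact fun h => by simpa using congrFun h ⟨0, hn⟩
  · symm
    rw [Set.eq_empty_iff_forall_notMem]
    intro v hv
    have h0 := hv 0
    have h1 := hv 1
    simp only [Matrix.cons_val_zero, Matrix.cons_val_one, Matrix.head_cons, one_mul, neg_mul,
      Finset.sum_neg_distrib] at h0 h1
    linarith

lemma isPolyhedron_univ {n : ℕ} : IsPolyhedron (Set.univ : Set (Fin n → ℝ)) :=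
  ⟨0, Fin.elim0, Fin.elim0, fun i => i.elim0, by ext v; simp⟩

lemma poly'_of_isPolyhedron {n : ℕ} {S : Set (Fin n → ℝ)} (h : IsPolyhedron S) : Poly' S := by
  obtain ⟨m, a, b, -, hS⟩ := h
  exact ⟨Fin m, inferInstance, a, b, hS⟩

lemma isPolyhedron_of_poly' {n : ℕ} (hn : 0 < n) {S : Set (Fin n → ℝ)} (h : Poly' S) :
    IsPolyhedron S := by
  classical
  obtain ⟨ι, _, a, b, rfl⟩ := h
  by_cases hbad : ∃ i, a i = 0 ∧ 0 < b i
  · obtain ⟨i, hai, hbi⟩ := hbad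
    have : {x : Fin n → ℝ | ∀ i, b i ≤ ∑ j, a i j * x j} = ∅ := by
      rw [Set.eq_empty_iff_forall_notMem]
      intro v hv
      have := hv i
      rw [hai] at this
      simp at this
      linarith
    rw [this]
    exact isPolyhedron_empty hn
  · push_neg at hbad
    let e := (Fintype.equivFin {i : ι // a i ≠ 0}).symm
    refine ⟨Fintype.card {i : ι // a i ≠ 0}, fun i => a (e i), fun i => b (e i),
      fun i => (e i).2, ?_⟩
    ext v
    simp only [Set.mem_setOf_eq]
    constructor
    · exact fun hv i => hv (e i)
    · intro hv i
      by_cases hai : a i = 0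
      · have h1 := hbad i hai
        rw [hai]
        simp only [Pi.zero_apply, zero_mul, Finset.sum_const_zero]
        linarith
      · have := hv (e.symm ⟨i, hai⟩)
        simpa [e] using this

lemma aux_div_le_div {ci cj u v : ℝ} (hi : 0 < ci) (hj : cj < 0) :
    u / ci ≤ v / cj ↔ ci * v ≤ cj * u := by
  rw [div_le_iff₀ hi, div_mul_eq_mul_div, le_div_iff_of_neg hj]
  constructor <;> intro h <;> nlinarith

/-- Existence of `t` satisfying finitely many one-variable linear inequalities. -/
lemma exists_t {ι : Type} [Fintype ι] (c s b : ι → ℝ) :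
    (∃ t : ℝ, ∀ i, b i ≤ s i + c i * t) ↔
      ((∀ i, c i = 0 → b i ≤ s i) ∧
       ∀ i j, 0 < c i → c j < 0 → c i * b j - c j * b i ≤ c i * s j - c j * s i) := by
  classical
  constructor
  · rintro ⟨t, ht⟩
    refine ⟨fun i hi => by have := ht i; rw [hi] at this; linarith, fun i j hi hj => ?_⟩
    have h1 := ht i
    have h2 := ht j
    nlinarith [mul_le_mul_of_nonneg_left h2 hi.le, mul_le_mul_of_nonneg_left h1 (neg_nonneg.2 hj.le)]
  · rintro ⟨h0, hp⟩
    set f : ι → ℝ := fun i => (b i - s i) / c i with hf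
    set P := Finset.univ.filter (fun i => 0 < c i) with hPdef
    set N := Finset.univ.filter (fun i => c i < 0) with hNdef
    have hmemP : ∀ i, i ∈ P ↔ 0 < c i := fun i => by simp [hPdef]
    have hmemN : ∀ i, i ∈ N ↔ c i < 0 := fun i => by simp [hNdef]
    have key : ∀ t : ℝ, ∀ i, (0 < c i → f i ≤ t → b i ≤ s i + c i * t) ∧
        (c i < 0 → t ≤ f i → b i ≤ s i + c i * t) := by
      intro t i
      constructor
      · intro hi hle
        rw [hf] at hle
        rw [div_le_iff₀ hi] at hle
        nlinarith
      · intro hi hle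
        have := mul_le_mul_of_nonpos_left hle hi.le
        have hne : c i ≠ 0 := ne_of_lt hi
        rw [hf] at this
        rw [mul_div_cancel₀ _ hne] at this
        linarith
    by_cases hPne : P.Nonempty
    · refine ⟨P.sup' hPne f, fun i => ?_⟩
      rcases lt_trichotomy (c i) 0 with h | h | h
      · refine (key _ i).2 h ?_
        apply Finset.sup'_le
        intro j hj
        have hcj : 0 < c j := (hmemP j).1 hj
        rw [hf]
        rw [aux_div_le_div hcj h]
        have := hp j i hcj h
        linarith
      · have := h0 i h
        rw [h]
        linarith
      · exact (key _ i).1 h (Finset.le_sup' f ((hmemP i).2 h))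
    · by_cases hNne : N.Nonempty
      · refine ⟨N.inf' hNne f, fun i => ?_⟩
        rcases lt_trichotomy (c i) 0 with h | h | h
        · exact (key _ i).2 h (Finset.inf'_le f ((hmemN i).2 h))
        · have := h0 i h
          rw [h]
          linarith
        · exact absurd ⟨i, (hmemP i).2 h⟩ hPne
      · refine ⟨0, fun i => ?_⟩
        rcases lt_trichotomy (c i) 0 with h | h | h
        · exact absurd ⟨i, (hmemN i).2 h⟩ hNne
        · have := h0 i h
          rw [h]
          linarith
        · exact absurd ⟨i, (hmemP i).2 h⟩ hPne

lemma poly'_step {k : ℕ} {S : Set (Fin (k + 1) → ℝ)} (h : Poly' S) :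
    Poly' {x : Fin k → ℝ | ∃ t : ℝ, Fin.snoc x t ∈ S} := by
  classical
  obtain ⟨ι, _, a, b, rfl⟩ := h
  set c : ι → ℝ := fun i => a i (Fin.last k) with hc
  set a' : ι → Fin k → ℝ := fun i j => a i j.castSucc with ha'
  have hsum : ∀ (x : Fin k → ℝ) (t : ℝ) (i : ι),
      (∑ j, a i j * (Fin.snoc x t : Fin (k+1) → ℝ) j) = (∑ j, a' i j * x j) + c i * t := by
    intro x t i
    rw [Fin.sum_univ_castSucc]
    simp [a', c]
  have hsum2 : ∀ (x : Fin k → ℝ) (i j : ι),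
      (∑ q, (c i * a' j q - c j * a' i q) * x q)
        = c i * (∑ q, a' j q * x q) - c j * (∑ q, a' i q * x q) := by
    intro x i j
    rw [Finset.mul_sum, Finset.mul_sum, ← Finset.sum_sub_distrib]
    exact Finset.sum_congr rfl fun q _ => by ring
  refine ⟨(ι × ι) ⊕ ι, inferInstance,
    Sum.elim (fun p => if 0 < c p.1 ∧ c p.2 < 0 then
        (fun q => c p.1 * a' p.2 q - c p.2 * a' p.1 q) else 0)
      (fun i => if c i = 0 then a' i else 0),
    Sum.elim (fun p => if 0 < c p.1 ∧ c p.2 < 0 then c p.1 * b p.2 - c p.2 * b p.1 else 0)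
      (fun i => if c i = 0 then b i else 0), ?_⟩
  ext x
  simp only [Set.mem_setOf_eq]
  have hiff : (∃ t : ℝ, ∀ i, b i ≤ (∑ j, a' i j * x j) + c i * t) ↔ _ :=
    exists_t c (fun i => ∑ j, a' i j * x j) b
  constructor
  · rintro ⟨t, ht⟩ r
    obtain ⟨h0, hp⟩ := hiff.1 ⟨t, fun i => by rw [← hsum]; exact ht i⟩
    rcases r with ⟨i, j⟩ | i
    · by_cases hcond : 0 < c i ∧ c j < 0
      · simp only [Sum.elim_inl, if_pos hcond]
        rw [hsum2]
        have := hp i j hcond.1 hcond.2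
        linarith
      · simp [hcond]
    · by_cases hci : c i = 0
      · simp only [Sum.elim_inr, if_pos hci]
        exact h0 i hci
      · simp [hci]
  · intro hr
    have hcond : (∀ i, c i = 0 → b i ≤ ∑ j, a' i j * x j) ∧
        ∀ i j, 0 < c i → c j < 0 →
          c i * b j - c j * b i ≤ c i * (∑ q, a' j q * x q) - c j * (∑ q, a' i q * x q) := by
      constructor
      · intro i hci
        have := hr (Sum.inr i)
        simpa [hci] using this
      · intro i j hi hj
        have := hr (Sum.inl (i, j))
        simp only [Sum.elim_inl, if_pos (And.intro hi hj)] at this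
        rw [hsum2] at this
        exact this
    obtain ⟨t, ht⟩ := hiff.2 hcond
    exact ⟨t, fun i => by rw [hsum]; exact ht i⟩

lemma poly'_proj {k : ℕ} : ∀ (e : ℕ) (S : Set (Fin (k + e) → ℝ)), Poly' S →
    Poly' {x : Fin k → ℝ | ∃ w : Fin e → ℝ, Fin.append x w ∈ S} := by
  intro e
  induction e with
  | zero =>
    intro S h
    have : {x : Fin k → ℝ | ∃ w : Fin 0 → ℝ, Fin.append x w ∈ S}
        = {x : Fin k → ℝ | (fun j : Fin (k + 0) => x (Fin.cast (Nat.add_zero k) j)) ∈ S} := by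
      ext x
      simp only [Set.mem_setOf_eq]
      constructor
      · rintro ⟨w, hw⟩
        have hw0 : w = Fin.elim0 := funext fun i => i.elim0
        rw [hw0, Fin.append_elim0] at hw
        exact hw
      · intro hx
        exact ⟨Fin.elim0, by rw [Fin.append_elim0]; exact hx⟩
    rw [this]
    obtain ⟨ι, _, a, b, rfl⟩ := h
    exact ⟨ι, inferInstance, fun i j => a i (Fin.cast (Nat.add_zero k).symm j), b, by
      ext x
      simp only [Set.mem_setOf_eq]
      refine forall_congr' fun i => ?_
      have hcast : ∀ j : Fin k, (Fin.cast (Nat.add_zero k).symm j : Fin (k+0)) = j := fun j => rfl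
      have hcast2 : ∀ j : Fin (k+0), (Fin.cast (Nat.add_zero k) j : Fin k) = j := fun j => rfl
      constructor
      · intro h
        calc b i ≤ ∑ j : Fin (k+0), a i j * x (Fin.cast (Nat.add_zero k) j) := h
          _ = _ := Finset.sum_congr rfl fun j _ => by rw [hcast2]
      · intro h
        calc b i ≤ ∑ j : Fin k, a i (Fin.cast (Nat.add_zero k).symm j) * x j := h
          _ = _ := Finset.sum_congr rfl fun j _ => by rw [hcast]⟩
  | succ e ih =>
    intro S h
    have h1 : Poly' {y : Fin (k + e) → ℝ | ∃ t : ℝ, Fin.snoc y t ∈ S} := poly'_step h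
    have h2 := ih _ h1
    have : {x : Fin k → ℝ | ∃ w : Fin (e+1) → ℝ, Fin.append x w ∈ S}
        = {x : Fin k → ℝ | ∃ w : Fin e → ℝ, Fin.append x w ∈
            {y : Fin (k + e) → ℝ | ∃ t : ℝ, Fin.snoc y t ∈ S}} := by
      ext x
      simp only [Set.mem_setOf_eq]
      constructor
      · rintro ⟨w, hw⟩
        refine ⟨Fin.init w, w (Fin.last e), ?_⟩
        rw [← Fin.append_snoc, Fin.snoc_init_self]
        exact hw
      · rintro ⟨w, t, hwt⟩
        exact ⟨Fin.snoc w t, by rw [Fin.append_snoc]; exact hwt⟩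
    rw [this]
    exact h2

lemma le_of_small {b c d : ℝ} (h : ∀ μ : ℝ, 0 < μ → μ ≤ 1 → b ≤ c + μ * d) : b ≤ c := by
  by_contra hlt
  push_neg at hlt
  rcases le_or_gt d 0 with hd | hd
  · have := h 1 one_pos le_rfl
    nlinarith
  · have hμ : 0 < min 1 ((b - c) / (2 * d)) := lt_min one_pos (div_pos (by linarith) (by linarith))
    have h1 := h _ hμ (min_le_left _ _)
    have h2 : min 1 ((b - c) / (2 * d)) * d ≤ (b - c) / 2 := by
      calc min 1 ((b - c) / (2 * d)) * d ≤ ((b - c) / (2 * d)) * d :=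
            mul_le_mul_of_nonneg_right (min_le_right _ _) hd.le
        _ = (b - c) / 2 := by field_simp
    linarith

lemma sum_mul_comb {n : ℕ} (α u v : Fin n → ℝ) (s t : ℝ) :
    ∑ j, α j * (s * u j + t * v j) = s * (∑ j, α j * u j) + t * (∑ j, α j * v j) := by
  rw [Finset.mul_sum, Finset.mul_sum, ← Finset.sum_add_distrib]
  exact Finset.sum_congr rfl fun j _ => by ring

lemma sum_mul_sub {n : ℕ} (α u v : Fin n → ℝ) :
    ∑ j, α j * (u j - v j) = (∑ j, α j * u j) - ∑ j, α j * v j := by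
  rw [← Finset.sum_sub_distrib]
  exact Finset.sum_congr rfl fun j _ => by ring

lemma sum_div' {n : ℕ} (α u : Fin n → ℝ) (s : ℝ) :
    ∑ j, α j * (u j / s) = (∑ j, α j * u j) / s := by
  rw [Finset.sum_div]
  exact Finset.sum_congr rfl fun j _ => by ring

def rowv {n : ℕ} (u v : Fin n → ℝ) (γ : ℝ) : Fin (n + (n + 1)) → ℝ :=
  Fin.append u (Fin.snoc v γ)

lemma rowv_dot {n : ℕ} (u v : Fin n → ℝ) (γ : ℝ) (x : Fin n → ℝ) (w : Fin (n + 1) → ℝ) :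
    ∑ j, rowv u v γ j * (Fin.append x w) j
      = (∑ j, u j * x j) + (∑ j, v j * w j.castSucc) + γ * w (Fin.last n) := by
  rw [Fin.sum_univ_add]
  simp only [rowv, Fin.append_left, Fin.append_right]
  rw [Fin.sum_univ_castSucc]
  simp only [Fin.snoc_castSucc, Fin.snoc_last]
  ring

lemma hull_key {n : ℕ} (hn : 0 < n) {P Q : Set (Fin n → ℝ)}
    (hP : IsPolyhedron P) (hQ : IsPolyhedron Q) (p0 : Fin n → ℝ) (hp0 : p0 ∈ P)
    (q0 : Fin n → ℝ) (hq0 : q0 ∈ Q) :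
    ∃ T, IsPolyhedron T ∧ P ⊆ T ∧ Q ⊆ T ∧
      ∀ R, IsPolyhedron R → P ⊆ R → Q ⊆ R → T ⊆ R := by
  classical
  obtain ⟨mP, aP, bP, -, hPeq⟩ := hP
  obtain ⟨mQ, aQ, bQ, -, hQeq⟩ := hQ
  -- facts about the base points
  have hp0' : ∀ i, bP i ≤ ∑ j, aP i j * p0 j := by rw [hPeq] at hp0; exact hp0
  have hq0' : ∀ i, bQ i ≤ ∑ j, aQ i j * q0 j := by rw [hQeq] at hq0; exact hq0
  -- the lifted system
  set A : (Fin mP ⊕ Fin mQ ⊕ Bool) → Fin (n + (n + 1)) → ℝ :=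
    Sum.elim (fun i => rowv (0 : Fin n → ℝ) (aP i) (-(bP i)))
      (Sum.elim (fun i => rowv (aQ i) (fun j => -(aQ i j)) (bQ i))
        (fun bb : Bool => if bb then rowv (0 : Fin n → ℝ) 0 1 else rowv (0 : Fin n → ℝ) 0 (-1)))
    with hA
  set B : (Fin mP ⊕ Fin mQ ⊕ Bool) → ℝ :=
    Sum.elim (fun _ => 0) (Sum.elim bQ (fun bb : Bool => if bb then 0 else -1)) with hB
  set S : Set (Fin (n + (n + 1)) → ℝ) := {v | ∀ r, B r ≤ ∑ j, A r j * v j} with hS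
  have hSpoly : Poly' S := ⟨_, inferInstance, A, B, hS⟩
  set T : Set (Fin n → ℝ) := {x | ∃ w : Fin (n + 1) → ℝ, Fin.append x w ∈ S} with hT
  have hTpoly : Poly' T := poly'_proj _ S hSpoly
  -- characterization of membership in T
  have memT : ∀ x : Fin n → ℝ, x ∈ T ↔
      ∃ (y : Fin n → ℝ) (lam : ℝ), 0 ≤ lam ∧ lam ≤ 1 ∧
        (∀ i, lam * bP i ≤ ∑ j, aP i j * y j) ∧
        (∀ i, (1 - lam) * bQ i ≤ ∑ j, aQ i j * (x j - y j)) := by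
    intro x
    constructor
    · rintro ⟨w, hw⟩
      simp only [hS, Set.mem_setOf_eq] at hw
      set y : Fin n → ℝ := fun j => w j.castSucc with hy
      set lam : ℝ := w (Fin.last n) with hlam
      have h3 := hw (Sum.inr (Sum.inr true))
      have h4 := hw (Sum.inr (Sum.inr false))
      simp only [hA, hB, Sum.elim_inr, if_pos, if_neg, Bool.false_eq_true, not_false_iff,
        ite_true, ite_false, rowv_dot, Pi.zero_apply, zero_mul, Finset.sum_const_zero] at h3 h4
      refine ⟨y, lam, by linarith, by linarith, fun i => ?_, fun i => ?_⟩
      · have h1 := hw (Sum.inl i)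
        simp only [hA, hB, Sum.elim_inl, rowv_dot, Pi.zero_apply, zero_mul,
          Finset.sum_const_zero] at h1
        simp only [hy, hlam]
        linarith
      · have h2 := hw (Sum.inr (Sum.inl i))
        simp only [hA, hB, Sum.elim_inr, Sum.elim_inl, rowv_dot] at h2
        have : ∑ j, -aQ i j * w j.castSucc = -∑ j, aQ i j * w j.castSucc := by
          rw [← Finset.sum_neg_distrib]
          exact Finset.sum_congr rfl fun j _ => by ring
        rw [this] at h2
        simp only [hy, hlam]
        rw [sum_mul_sub] at *
        nlinarith [h2]
    · rintro ⟨y, lam, h0, h1, hAy, hCz⟩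
      refine ⟨Fin.snoc y lam, ?_⟩
      simp only [hS, Set.mem_setOf_eq]
      rintro (i | i | bb)
      · simp only [hA, hB, Sum.elim_inl, rowv_dot, Pi.zero_apply, zero_mul,
          Finset.sum_const_zero, Fin.snoc_castSucc, Fin.snoc_last]
        have := hAy i
        linarith
      · simp only [hA, hB, Sum.elim_inr, Sum.elim_inl, rowv_dot, Fin.snoc_castSucc,
          Fin.snoc_last]
        have := hCz i
        rw [sum_mul_sub] at this
        have e1 : ∑ j, -aQ i j * y j = -∑ j, aQ i j * y j := by
          rw [← Finset.sum_neg_distrib]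
          exact Finset.sum_congr rfl fun j _ => by ring
        rw [e1]
        nlinarith [this]
      · cases bb
        · simp only [hA, hB, Sum.elim_inr, Bool.false_eq_true, if_neg, not_false_iff,
            ite_false, rowv_dot, Pi.zero_apply, zero_mul, Finset.sum_const_zero,
            Fin.snoc_last]
          linarith
        · simp only [hA, hB, Sum.elim_inr, ite_true, rowv_dot, Pi.zero_apply, zero_mul,
            Finset.sum_const_zero, Fin.snoc_last]
          linarith
  refine ⟨T, isPolyhedron_of_poly' hn hTpoly, ?_, ?_, ?_⟩
  · -- P ⊆ T
    intro x hx
    rw [hPeq] at hx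
    rw [memT]
    refine ⟨x, 1, zero_le_one, le_rfl, fun i => by rw [one_mul]; exact hx i, fun i => ?_⟩
    simp
  · -- Q ⊆ T
    intro x hx
    rw [hQeq] at hx
    rw [memT]
    refine ⟨0, 0, le_rfl, zero_le_one, fun i => by simp, fun i => ?_⟩
    simpa using hx i
  · -- minimality
    intro R hR hPR hQR x hx
    obtain ⟨y, lam, h0, h1, hAy, hCz⟩ := (memT x).1 hx
    obtain ⟨mR, aR, bR, -, hReq⟩ := hR
    have hPR' : ∀ v : Fin n → ℝ, (∀ i, bP i ≤ ∑ j, aP i j * v j) → ∀ i, bR i ≤ ∑ j, aR i j * v j := by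
      intro v hv
      have : v ∈ R := hPR (by rw [hPeq]; exact hv)
      rwa [hReq] at this
    have hQR' : ∀ v : Fin n → ℝ, (∀ i, bQ i ≤ ∑ j, aQ i j * v j) → ∀ i, bR i ≤ ∑ j, aR i j * v j := by
      intro v hv
      have : v ∈ R := hQR (by rw [hQeq]; exact hv)
      rwa [hReq] at this
    rw [hReq]
    intro i
    apply le_of_small (d := ((∑ j, aR i j * p0 j) + ∑ j, aR i j * q0 j) / 2 - ∑ j, aR i j * x j)
    intro μ hμ0 hμ1
    set lam' : ℝ := (1 - μ) * lam + μ / 2 with hlam'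
    have hl0 : 0 < lam' := by rw [hlam']; nlinarith [mul_nonneg (by linarith : (0:ℝ) ≤ 1 - μ) h0]
    have hl1 : lam' < 1 := by rw [hlam']; nlinarith [mul_nonneg (by linarith : (0:ℝ) ≤ 1 - μ) (by linarith : (0:ℝ) ≤ 1 - lam)]
    set y' : Fin n → ℝ := fun j => (1 - μ) * y j + (μ / 2) * p0 j with hy'
    set z' : Fin n → ℝ := fun j => (1 - μ) * (x j - y j) + (μ / 2) * q0 j with hz'
    -- p' := y'/lam' ∈ P
    have hp'mem : ∀ i', bP i' ≤ ∑ j, aP i' j * (y' j / lam') := by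
      intro i'
      rw [sum_div', le_div_iff₀ hl0, hy', sum_mul_comb, hlam']
      nlinarith [mul_le_mul_of_nonneg_left (hAy i') (by linarith : (0:ℝ) ≤ 1 - μ),
        mul_le_mul_of_nonneg_left (hp0' i') (by linarith : (0:ℝ) ≤ μ / 2)]
    have hq'mem : ∀ i', bQ i' ≤ ∑ j, aQ i' j * (z' j / (1 - lam')) := by
      intro i'
      rw [sum_div', le_div_iff₀ (by linarith : (0:ℝ) < 1 - lam'), hz', sum_mul_comb, hlam']
      nlinarith [mul_le_mul_of_nonneg_left (hCz i') (by linarith : (0:ℝ) ≤ 1 - μ),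
        mul_le_mul_of_nonneg_left (hq0' i') (by linarith : (0:ℝ) ≤ μ / 2)]
    have hRp := hPR' _ hp'mem i
    have hRq := hQR' _ hq'mem i
    -- convert the divided sums back
    have e1 : ∑ j, aR i j * (y' j / lam') = (∑ j, aR i j * y' j) / lam' := sum_div' _ _ _
    have e2 : ∑ j, aR i j * (z' j / (1 - lam')) = (∑ j, aR i j * z' j) / (1 - lam') :=
      sum_div' _ _ _
    rw [e1, le_div_iff₀ hl0] at hRp
    rw [e2, le_div_iff₀ (by linarith : (0:ℝ) < 1 - lam')] at hRq
    have ey : ∑ j, aR i j * y' j = (1 - μ) * (∑ j, aR i j * y j) + (μ / 2) * ∑ j, aR i j * p0 j := by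
      rw [hy', sum_mul_comb]
    have ez : ∑ j, aR i j * z' j
        = (1 - μ) * ((∑ j, aR i j * x j) - ∑ j, aR i j * y j) + (μ / 2) * ∑ j, aR i j * q0 j := by
      rw [hz', sum_mul_comb, sum_mul_sub]
    rw [ey] at hRp
    rw [ez] at hRq
    rw [hlam'] at hRp hRq
    nlinarith [hRp, hRq]

lemma poly'_inter {k : ℕ} {P Q : Set (Fin k → ℝ)} (hP : Poly' P) (hQ : Poly' Q) :
    Poly' (P ∩ Q) := by
  obtain ⟨ι, _, a, b, rfl⟩ := hP
  obtain ⟨κ, _, c, d, rfl⟩ := hQ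
  refine ⟨ι ⊕ κ, inferInstance, Sum.elim a c, Sum.elim b d, ?_⟩
  ext x
  simp only [Set.mem_inter_iff, Set.mem_setOf_eq, Sum.forall, Sum.elim_inl, Sum.elim_inr]

/-- The convex polyhedra in `ℝⁿ` ordered by inclusion form a lattice: `∅` is the bottom
element and `ℝⁿ` the top element; the meet of two polyhedra is their intersection, and
their join is the poly-hull, the smallest polyhedron containing their union. -/
theorem stmt11 {n : ℕ} (hn : 0 < n) :
    IsPolyhedron (∅ : Set (Fin n → ℝ)) ∧
    IsPolyhedron (Set.univ : Set (Fin n → ℝ)) ∧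
    (∀ P : Set (Fin n → ℝ), IsPolyhedron P → ∅ ⊆ P ∧ P ⊆ Set.univ) ∧
    (∀ P Q : Set (Fin n → ℝ), IsPolyhedron P → IsPolyhedron Q →
      (IsPolyhedron (P ∩ Q) ∧ P ∩ Q ⊆ P ∧ P ∩ Q ⊆ Q ∧
        (∀ R, IsPolyhedron R → R ⊆ P → R ⊆ Q → R ⊆ P ∩ Q)) ∧
      (IsPolyhedron (polyHull P Q) ∧ P ⊆ polyHull P Q ∧ Q ⊆ polyHull P Q ∧
        (∀ R, IsPolyhedron R → P ⊆ R → Q ⊆ R → polyHull P Q ⊆ R))) := by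
  refine ⟨isPolyhedron_empty hn, isPolyhedron_univ,
    fun P _ => ⟨Set.empty_subset P, Set.subset_univ P⟩, ?_⟩
  intro P Q hP hQ
  have hmin : ∀ R, IsPolyhedron R → P ⊆ R → Q ⊆ R → polyHull P Q ⊆ R :=
    fun R hR h1 h2 => Set.sInter_subset_of_mem ⟨hR, h1, h2⟩
  refine ⟨⟨isPolyhedron_of_poly' hn (poly'_inter (poly'_of_isPolyhedron hP)
      (poly'_of_isPolyhedron hQ)), Set.inter_subset_left, Set.inter_subset_right,
      fun R _ h1 h2 => Set.subset_inter h1 h2⟩,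
    ?_, Set.subset_sInter fun R hR => hR.2.1, Set.subset_sInter fun R hR => hR.2.2, hmin⟩
  have hT : ∃ T, IsPolyhedron T ∧ P ⊆ T ∧ Q ⊆ T ∧
      ∀ R, IsPolyhedron R → P ⊆ R → Q ⊆ R → T ⊆ R := by
    rcases Set.eq_empty_or_nonempty P with hPe | ⟨p0, hp0⟩
    · exact ⟨Q, hQ, hPe ▸ Set.empty_subset Q, subset_rfl, fun R _ _ h2 => h2⟩
    rcases Set.eq_empty_or_nonempty Q with hQe | ⟨q0, hq0⟩
    · exact ⟨P, hP, subset_rfl, hQe ▸ Set.empty_subset P, fun R _ h1 _ => h1⟩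
    exact hull_key hn hP hQ p0 hp0 q0 hq0
  obtain ⟨T, hTpoly, hTP, hTQ, hTmin⟩ := hT
  have : polyHull P Q = T := Set.Subset.antisymm (hmin T hTpoly hTP hTQ)
    (Set.subset_sInter fun R hR => hTmin R hR.1 hR.2.1 hR.2.2)
  rw [this]
  exact hTpoly
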